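/- arXiv:1609.07152 — 6 statements merged into one kernel-verified Lean document; each statement's English description precedes it below -/
import Mathlib

section
/- Consider a fully input convex neural network (FICNN) with k layers defined by the recurrence z_1 = g_0(W_0^{(y)} y + b_0), z_{i+1} = g_i(W_i^{(z)} z_i + W_i^{(y)} y + b_i) for i = 1, …, k−1, and output f(y) = z_k (a scalar). If every entry of each matrix W_i^{(z)} for i = 1, …, k−1 is nonnegative and every activation g_i : ℝ → ℝ (applied elementwise) is convex and nondecreasing, then f : ℝ^p → ℝ is a convex function of y; moreover every coordinate of every intermediate layer z_i is a convex function of y. -/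
private lemma comp_convex_mono {E : Type*} [AddCommGroup E] [Module ℝ E]
    {F : E → ℝ} {g : ℝ → ℝ} (hF : ConvexOn ℝ Set.univ F)
    (hg : ConvexOn ℝ Set.univ g) (hmono : Monotone g) :
    ConvexOn ℝ Set.univ (fun y => g (F y)) := by
  refine ⟨convex_univ, fun x _ y _ a b ha hb hab => ?_⟩
  calc g (F (a • x + b • y)) ≤ g (a • F x + b • F y) :=
        hmono (hF.2 trivial trivial ha hb hab)
    _ ≤ a • g (F x) + b • g (F y) := hg.2 trivial trivial ha hb hab

private lemma sum_convex {E ι : Type*} [AddCommGroup E] [Module ℝ E] [DecidableEq ι]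
    (s : Finset ι) (w : ι → ℝ) (h : ι → E → ℝ)
    (hw : ∀ l ∈ s, 0 ≤ w l) (hh : ∀ l ∈ s, ConvexOn ℝ Set.univ (h l)) :
    ConvexOn ℝ Set.univ (fun y => ∑ l ∈ s, w l * h l y) := by
  induction s using Finset.induction_on with
  | empty => simpa using convexOn_const (0 : ℝ) convex_univ
  | @insert a s' hx ih =>
    simp only [Finset.sum_insert hx]
    have h1 : ConvexOn ℝ Set.univ (fun y => w a * h a y) := by
      simpa [smul_eq_mul] using
        (hh a (Finset.mem_insert_self a s')).smul (hw a (Finset.mem_insert_self a s'))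
    exact h1.add (ih (fun l hl => hw l (Finset.mem_insert_of_mem hl))
      (fun l hl => hh l (Finset.mem_insert_of_mem hl)))

/-- A fully input convex neural network (FICNN) with `k` layers, given by
`z₁ = g₀(W₀⁽ʸ⁾ y + b₀)`, `z_{i+1} = gᵢ(Wᵢ⁽ᶻ⁾ zᵢ + Wᵢ⁽ʸ⁾ y + bᵢ)` and scalar output
`f(y) = z_k`, is convex in `y` provided all `Wᵢ⁽ᶻ⁾` (for `1 ≤ i ≤ k-1`) have nonnegative
entries and all activations `gᵢ` are convex and nondecreasing; moreover every coordinate of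
every intermediate layer is convex in `y`.  (We encode `z₀ ≡ 0`, so the recurrence at `i = 0`
reduces to `z₁ = g₀(W₀⁽ʸ⁾ y + b₀)`.) -/
theorem ficnn_convex
    (k p : ℕ) (hk : 1 ≤ k)
    (d : ℕ → ℕ) (hdk : d k = 1)
    (Wz : (i : ℕ) → Matrix (Fin (d (i + 1))) (Fin (d i)) ℝ)
    (Wy : (i : ℕ) → Matrix (Fin (d (i + 1))) (Fin p) ℝ)
    (b : (i : ℕ) → Fin (d (i + 1)) → ℝ)
    (g : ℕ → ℝ → ℝ)
    (hW : ∀ i, 1 ≤ i → i < k → ∀ r c, 0 ≤ Wz i r c)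
    (hgconv : ∀ i, i < k → ConvexOn ℝ Set.univ (g i))
    (hgmono : ∀ i, i < k → Monotone (g i))
    (z : (i : ℕ) → (Fin p → ℝ) → Fin (d i) → ℝ)
    (hz0 : ∀ y, z 0 y = 0)
    (hzrec : ∀ i y, z (i + 1) y = fun j =>
      g i ((Wz i).mulVec (z i y) j + (Wy i).mulVec y j + b i j))
    (f : (Fin p → ℝ) → ℝ)
    (hf : ∀ y, f y = z k y ⟨0, by omega⟩) :
    ConvexOn ℝ Set.univ f ∧
      ∀ i, i ≤ k → ∀ j : Fin (d i), ConvexOn ℝ Set.univ (fun y => z i y j) := by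
  have main : ∀ i, i ≤ k → ∀ j : Fin (d i), ConvexOn ℝ Set.univ (fun y => z i y j) := by
    intro i
    induction i with
    | zero =>
      intro _ j
      have : (fun y => z 0 y j) = fun _ => (0 : ℝ) := by
        funext y; rw [hz0 y]; rfl
      rw [this]; exact convexOn_const _ convex_univ
    | succ n ih =>
      intro hn j
      have hnk : n < k := hn
      have hrec : (fun y => z (n + 1) y j) = fun y =>
          g n ((∑ l, Wz n j l * z n y l) + ((Wy n).mulVec y j + b n j)) := by
        funext y
        rw [hzrec n y]
        simp [Matrix.mulVec, dotProduct, add_assoc]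
      rw [hrec]
      -- inner function is convex
      have haff : ConvexOn ℝ Set.univ (fun y : Fin p → ℝ => (Wy n).mulVec y j + b n j) := by
        refine ⟨convex_univ, fun x _ y _ a c ha hc hac => ?_⟩
        show (Wy n).mulVec (a • x + c • y) j + b n j ≤
          a • ((Wy n).mulVec x j + b n j) + c • ((Wy n).mulVec y j + b n j)
        rw [Matrix.mulVec_add, Matrix.mulVec_smul, Matrix.mulVec_smul]
        simp only [Pi.add_apply, Pi.smul_apply, smul_eq_mul]
        have hb : a * b n j + c * b n j = b n j := by rw [← add_mul, hac, one_mul]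
        linarith
      have hsum : ConvexOn ℝ Set.univ (fun y => ∑ l, Wz n j l * z n y l) := by
        rcases Nat.eq_zero_or_pos n with h0 | hpos
        · subst h0
          have : (fun y => ∑ l, Wz 0 j l * z 0 y l) = fun _ => (0 : ℝ) := by
            funext y; rw [hz0 y]; simp
          rw [this]; exact convexOn_const _ convex_univ
        · exact sum_convex Finset.univ (Wz n j) (fun l y => z n y l)
            (fun l _ => hW n hpos hnk j l) (fun l _ => ih (le_of_lt hnk) l)
      have hinner := hsum.add haff
      exact comp_convex_mono hinner (hgconv n hnk) (hgmono n hnk)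
  refine ⟨?_, main⟩
  have : f = fun y => z k y ⟨0, by omega⟩ := funext hf
  rw [this]
  exact main k le_rfl _
end

section
/- Every purely feedforward network composed with a final inner product can be represented exactly by a PICNN: given a feedforward network f̂(x) ∈ ℝ^p defined by u_0 = x, u_{i+1} = g̃_i(W̃_i u_i + b̃_i) for i = 0, …, k−2, f̂(x) = u_{k−1}, there exists a choice of PICNN parameters with k layers whose x-path is exactly this feedforward network, whose y-path weights are all zero except W_{k−1}^{(yu)} = I and W_{k−1}^{(y)} = 1ᵀ (with identity final activation g_{k−1}), such that for all x and all y ∈ ℝ^p the PICNN output equals f̂(x)ᵀ y. -/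
/-- Every purely feedforward network composed with a final inner product is
exactly representable by a PICNN.  We write the number of layers as `k = m + 1` (so the final
layer index `k - 1` is `m`), with output dimension `p = e m` of the feedforward network
`f̂(x) = u_{k-1}(x)`.  Choose the PICNN parameters so that the `x`-path is exactly the
feedforward network, and the `y`-path weights are all zero except `W_{k-1}⁽ʸᵘ⁾ = I` and
`W_{k-1}⁽ʸ⁾ = 1ᵀ`, with identity final activation `g_{k-1}`.  Then for all `x` and all
`y ∈ ℝᵖ` the PICNN output equals `f̂(x)ᵀ y`. -/
theorem picnn_represents_feedforward
    (m : ℕ)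
    (d e : ℕ → ℕ) (hdk : d (m + 1) = 1)
    -- the feedforward network (= the PICNN x-path)
    (Wtil : (i : ℕ) → Matrix (Fin (e (i + 1))) (Fin (e i)) ℝ)
    (btil : (i : ℕ) → Fin (e (i + 1)) → ℝ)
    (gtil : ℕ → ℝ → ℝ)
    (u : (i : ℕ) → (Fin (e 0) → ℝ) → Fin (e i) → ℝ)
    (hu0 : ∀ x, u 0 x = x)
    (hurec : ∀ i x, u (i + 1) x = fun j => gtil i ((Wtil i).mulVec (u i x) j + btil i j))
    (fhat : (Fin (e 0) → ℝ) → Fin (e m) → ℝ)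
    (hfhat : ∀ x, fhat x = u m x)
    -- the PICNN y-path parameters
    (Wz : (i : ℕ) → Matrix (Fin (d (i + 1))) (Fin (d i)) ℝ)
    (Wzu : (i : ℕ) → Matrix (Fin (d i)) (Fin (e i)) ℝ)
    (bz : (i : ℕ) → Fin (d i) → ℝ)
    (Wy : (i : ℕ) → Matrix (Fin (d (i + 1))) (Fin (e m)) ℝ)
    (Wyu : (i : ℕ) → Matrix (Fin (e m)) (Fin (e i)) ℝ)
    (by' : (i : ℕ) → Fin (e m) → ℝ)
    (Wu : (i : ℕ) → Matrix (Fin (d (i + 1))) (Fin (e i)) ℝ)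
    (b : (i : ℕ) → Fin (d (i + 1)) → ℝ)
    (g : ℕ → ℝ → ℝ)
    -- the chosen values: all y-path weights zero except W_{k-1}⁽ʸᵘ⁾ = I, W_{k-1}⁽ʸ⁾ = 1ᵀ,
    -- and identity final activation
    (hWz : ∀ i, Wz i = 0)
    (hWzu : ∀ i, Wzu i = 0)
    (hbz : ∀ i, bz i = 0)
    (hWy0 : ∀ i, i ≠ m → Wy i = 0)
    (hWyOnes : ∀ (j : Fin (d (m + 1))) (r : Fin (e m)), Wy m j r = 1)
    (hWyu0 : ∀ i, i ≠ m → Wyu i = 0)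
    (hWyuId : Wyu m = 1)
    (hby : ∀ i, by' i = 0)
    (hWu : ∀ i, Wu i = 0)
    (hb : ∀ i, b i = 0)
    (hgLast : g m = id)
    -- the PICNN y-path
    (zP : (i : ℕ) → (Fin (e 0) → ℝ) → (Fin (e m) → ℝ) → Fin (d i) → ℝ)
    (hzP0 : ∀ x y, zP 0 x y = 0)
    (hzPrec : ∀ i x y, zP (i + 1) x y = fun j =>
      g i ((Wz i).mulVec
            (fun r => zP i x y r * max 0 ((Wzu i).mulVec (u i x) r + bz i r)) j
        + (Wy i).mulVec (fun r => y r * ((Wyu i).mulVec (u i x) r + by' i r)) j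
        + (Wu i).mulVec (u i x) j + b i j)) :
    ∀ (x : Fin (e 0) → ℝ) (y : Fin (e m) → ℝ) (j : Fin (d (m + 1))),
      zP (m + 1) x y j = ∑ r, fhat x r * y r := by
  intro x y j
  rw [hzPrec]
  simp [hWz, hWu, hb, hby, hWyuId, hgLast, hfhat, Matrix.mulVec, dotProduct,
    Matrix.one_apply, hWyOnes, mul_comm]
end

section
/- If f : ℝ^n → ℝ is convex, then every minimizer y* of y ↦ f(y) − H(y) over [0,1]^n lies in the open cube (0,1)^n, i.e., 0 < y*_i < 1 for every coordinate i. -/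
/-!
Suppose a minimizer `y*` has a coordinate `y*ᵢ ∈ {0, 1}` and move it towards the centre `c` of the
cube: `y = (1 - t) y* + t c`. By convexity `f` increases by at most `t (f c - f y*)`, which is linear
in `t`. The entropy does not decrease in any coordinate (it is concave with maximum at `1/2`), and
in coordinate `i` it increases from `0` to at least `-(t/2) log (t/2)`, which is superlinear in `t`
near `0`. So for small `t` the objective strictly decreases, contradicting minimality.
-/

noncomputable def negEnt {n : ℕ} (y : Fin n → ℝ) : ℝ :=
  ∑ i, (y i * Real.log (y i) + (1 - y i) * Real.log (1 - y i))

open Real Set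

lemma negEnt_eq_neg_sum_binEntropy {n : ℕ} (y : Fin n → ℝ) :
    negEnt y = -∑ i, binEntropy (y i) := by
  simp only [negEnt, binEntropy, log_inv, mul_neg, ← neg_add, Finset.sum_neg_distrib, neg_neg]

lemma negMulLog_le_binEntropy {p : ℝ} (h₀ : 0 ≤ p) (h₁ : p ≤ 1) :
    negMulLog p ≤ binEntropy p := by
  rw [binEntropy_eq_negMulLog_add_negMulLog_one_sub]
  linarith [negMulLog_nonneg (sub_nonneg.2 h₁) (by linarith)]

lemma binEntropy_le_binEntropy_convexComb_two_inv {x t : ℝ} (hx : x ∈ Icc (0 : ℝ) 1)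
    (ht₀ : 0 ≤ t) (ht₁ : t ≤ 1) :
    binEntropy x ≤ binEntropy ((1 - t) * x + t * 2⁻¹) := by
  have hconc := strictConcave_binEntropy.concaveOn.2 hx (by norm_num : (2⁻¹ : ℝ) ∈ Icc 0 1)
    (sub_nonneg.2 ht₁) ht₀ (sub_add_cancel 1 t)
  simp only [smul_eq_mul, binEntropy_two_inv] at hconc
  nlinarith [binEntropy_le_log_two (p := x)]

lemma binEntropy_convexComb_two_inv_of_eq_zero_or_one {x : ℝ} (hx : x = 0 ∨ x = 1) (t : ℝ) :
    binEntropy ((1 - t) * x + t * 2⁻¹) = binEntropy (t / 2) := by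
  rcases hx with rfl | rfl
  · ring_nf
  · rw [← binEntropy_one_sub (t / 2)]
    ring_nf

lemma negEnt_convexComb_center_add_negMulLog_le {n : ℕ} {y : Fin n → ℝ}
    (hy : y ∈ Icc (0 : Fin n → ℝ) 1) {i : Fin n} (hi : y i = 0 ∨ y i = 1)
    {t : ℝ} (ht₀ : 0 ≤ t) (ht₁ : t ≤ 1) :
    negEnt ((1 - t) • y + t • fun _ => (2⁻¹ : ℝ)) + negMulLog (t / 2) ≤ negEnt y := by
  simp only [negEnt_eq_neg_sum_binEntropy, Pi.add_apply, Pi.smul_apply, smul_eq_mul]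
  rw [← Finset.add_sum_erase _ _ (Finset.mem_univ i),
    ← Finset.add_sum_erase _ _ (Finset.mem_univ i),
    binEntropy_convexComb_two_inv_of_eq_zero_or_one hi, binEntropy_eq_zero.2 hi]
  have hrest := Finset.sum_le_sum fun j (_ : j ∈ Finset.univ.erase i) ↦
    binEntropy_le_binEntropy_convexComb_two_inv ⟨hy.1 j, hy.2 j⟩ ht₀ ht₁
  linarith [negMulLog_le_binEntropy (p := t / 2) (by linarith) (by linarith)]

lemma exists_mul_lt_negMulLog_half (C : ℝ) : ∃ t ∈ Ioc (0 : ℝ) 1, t * C < negMulLog (t / 2) := by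
  set t := min 1 (exp (-2 * C))
  have ht₀ : 0 < t := lt_min one_pos (exp_pos _)
  have hlog : log (t / 2) < -2 * C := by
    rw [← log_exp (-2 * C)]
    exact log_lt_log (by positivity) (by linarith [min_le_right 1 (exp (-2 * C))])
  refine ⟨t, ⟨ht₀, min_le_left _ _⟩, ?_⟩
  rw [negMulLog]
  nlinarith

/-- If `f : ℝⁿ → ℝ` is convex, then every minimizer `y*` of
`y ↦ f(y) - H(y) = f(y) + negEnt y` over `[0,1]ⁿ` lies in the open cube `(0,1)ⁿ`. -/
theorem entropy_barrier_minimizer_interior (n : ℕ)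
    (f : (Fin n → ℝ) → ℝ) (hf : ConvexOn ℝ Set.univ f)
    (ystar : Fin n → ℝ)
    (hmem : ystar ∈ Set.Icc (0 : Fin n → ℝ) 1)
    (hmin : ∀ y ∈ Set.Icc (0 : Fin n → ℝ) 1,
      f ystar + negEnt ystar ≤ f y + negEnt y) :
    ∀ i, ystar i ∈ Set.Ioo (0 : ℝ) 1 := by
  intro i
  by_contra hint
  have hbdry : ystar i = 0 ∨ ystar i = 1 := by
    simp only [mem_Ioo, not_and_or, not_lt] at hint
    rcases hint with h | h
    · exact .inl (le_antisymm h (hmem.1 i))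
    · exact .inr (le_antisymm (hmem.2 i) h)
  set c : Fin n → ℝ := fun _ => 2⁻¹
  obtain ⟨t, ⟨ht₀, ht₁⟩, hgain⟩ := exists_mul_lt_negMulLog_half (f c - f ystar)
  have hc : c ∈ Icc (0 : Fin n → ℝ) 1 := ⟨fun _ => by norm_num [c], fun _ => by norm_num [c]⟩
  have hy := convex_Icc (0 : Fin n → ℝ) 1 hmem hc (sub_nonneg.2 ht₁) ht₀.le (sub_add_cancel 1 t)
  have hf_le := hf.2 (mem_univ ystar) (mem_univ c) (sub_nonneg.2 ht₁) ht₀.le (sub_add_cancel 1 t)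
  have hent : negEnt ((1 - t) • ystar + t • c) + negMulLog (t / 2) ≤ negEnt ystar :=
    negEnt_convexComb_center_add_negMulLog_le hmem hbdry ht₀.le ht₁
  simp only [smul_eq_mul] at hf_le
  linarith [hmin _ hy]
end

section
/- Weak duality for the bundle entropy subproblem: let G ∈ ℝ^{k×n} and h ∈ ℝ^k. For every y ∈ [0,1]^n and t ∈ ℝ satisfying Gy + h ≤ t·1 (componentwise), and every λ ∈ ℝ^k with λ ≥ 0 and 1ᵀλ = 1, it holds that (G1 + h)ᵀλ − ∑_{j=1}^n log(1 + exp((Gᵀλ)_j)) ≤ t − H(y). -/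
lemma ptwise (a y : ℝ) (h0 : 0 ≤ y) (h1 : y ≤ 1) :
    a - Real.log (1 + Real.exp a) ≤
      a * y + (y * Real.log y + (1 - y) * Real.log (1 - y)) := by
  have hep : (0:ℝ) < Real.exp a := Real.exp_pos a
  have hpos : (0:ℝ) < 1 + Real.exp a := by linarith
  rcases eq_or_lt_of_le h0 with h0' | h0'
  · -- y = 0
    rw [← h0']
    simp only [mul_zero, zero_mul, sub_zero, Real.log_one, zero_add, mul_zero, add_zero, mul_one]
    have : a ≤ Real.log (1 + Real.exp a) :=
      (Real.le_log_iff_exp_le hpos).2 (by linarith)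
    linarith
  · rcases eq_or_lt_of_le h1 with h1' | h1'
    · -- y = 1
      rw [h1']
      simp only [sub_self, Real.log_one, mul_zero, zero_mul, add_zero, mul_one]
      have : (0:ℝ) ≤ Real.log (1 + Real.exp a) := Real.log_nonneg (by linarith)
      linarith
    · -- 0 < y < 1
      have hy1 : (0:ℝ) < 1 - y := by linarith
      have hgm := Real.geom_mean_le_arith_mean2_weighted (le_of_lt hy1) h0
        (le_of_lt (div_pos hep hy1)) (le_of_lt (by positivity : (0:ℝ) < 1 / y))
        (by ring)
      have hgmpos : (0:ℝ) < (Real.exp a / (1 - y)) ^ (1 - y) * (1 / y) ^ y := by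
        positivity
      have harith : (1 - y) * (Real.exp a / (1 - y)) + y * (1 / y) = 1 + Real.exp a := by
        field_simp; ring
      have hlog : Real.log ((Real.exp a / (1 - y)) ^ (1 - y) * (1 / y) ^ y)
          ≤ Real.log (1 + Real.exp a) := by
        apply Real.log_le_log hgmpos
        calc (Real.exp a / (1 - y)) ^ (1 - y) * (1 / y) ^ y
            ≤ (1 - y) * (Real.exp a / (1 - y)) + y * (1 / y) := hgm
          _ = 1 + Real.exp a := harith
      rw [Real.log_mul (by positivity) (by positivity),
        Real.log_rpow (by positivity), Real.log_rpow (by positivity),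
        Real.log_div (ne_of_gt hep) (ne_of_gt hy1), Real.log_exp,
        Real.log_div one_ne_zero (ne_of_gt h0'), Real.log_one] at hlog
      nlinarith [hlog]


/-- Weak duality for the bundle entropy subproblem: for every
primal-feasible `(y, t)` (i.e. `y ∈ [0,1]ⁿ`, `Gy + h ≤ t·1`) and every dual-feasible `λ`
(i.e. `λ ≥ 0`, `1ᵀλ = 1`), we have
`(G1 + h)ᵀλ - ∑ⱼ log (1 + exp ((Gᵀλ)ⱼ)) ≤ t - H(y) = t + negEnt y`. -/
theorem bundle_entropy_weak_duality (k n : ℕ)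
    (G : Matrix (Fin k) (Fin n) ℝ) (h : Fin k → ℝ)
    (y : Fin n → ℝ) (hy : y ∈ Set.Icc (0 : Fin n → ℝ) 1)
    (t : ℝ) (hfeas : ∀ i, G.mulVec y i + h i ≤ t)
    (lam : Fin k → ℝ) (hlam : ∀ i, 0 ≤ lam i) (hsum : ∑ i, lam i = 1) :
    (∑ i, (G.mulVec (fun _ => 1) i + h i) * lam i)
        - ∑ j, Real.log (1 + Real.exp (G.transpose.mulVec lam j)) ≤
      t + negEnt y := by
  obtain ⟨hy0, hy1⟩ := hy
  set a : Fin n → ℝ := G.transpose.mulVec lam with ha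
  have h1 : ∑ i, G.mulVec (fun _ => 1) i * lam i = ∑ j, a j := by
    simp only [ha, Matrix.mulVec, dotProduct, Matrix.transpose_apply,
      Finset.sum_mul, Finset.mul_sum, mul_one]
    rw [Finset.sum_comm]
  have h2 : ∑ i, G.mulVec y i * lam i = ∑ j, a j * y j := by
    simp only [ha, Matrix.mulVec, dotProduct, Matrix.transpose_apply,
      Finset.sum_mul, Finset.mul_sum]
    rw [Finset.sum_comm]
    congr 1; ext j; congr 1; ext i; ring
  have hpt : ∑ j, a j - ∑ j, Real.log (1 + Real.exp (a j))
      ≤ ∑ j, a j * y j + negEnt y := by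
    rw [negEnt, ← Finset.sum_add_distrib, ← Finset.sum_sub_distrib]
    apply Finset.sum_le_sum
    intro j _
    exact ptwise (a j) (y j) (hy0 j) (hy1 j)
  have hfe : ∑ i, (G.mulVec y i + h i) * lam i ≤ t := by
    calc ∑ i, (G.mulVec y i + h i) * lam i ≤ ∑ i, t * lam i :=
          Finset.sum_le_sum fun i _ => mul_le_mul_of_nonneg_right (hfeas i) (hlam i)
      _ = t := by rw [← Finset.mul_sum, hsum, mul_one]
  have e1 : ∑ i, (G.mulVec (fun _ => 1) i + h i) * lam i
      = ∑ j, a j + ∑ i, h i * lam i := by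
    rw [← h1, ← Finset.sum_add_distrib]; congr 1; ext i; ring
  have e2 : ∑ i, (G.mulVec y i + h i) * lam i
      = ∑ j, a j * y j + ∑ i, h i * lam i := by
    rw [← h2, ← Finset.sum_add_distrib]; congr 1; ext i; ring
  linarith
end

section
/- KKT sufficiency for the bundle entropy subproblem: let G ∈ ℝ^{k×n}, h ∈ ℝ^k, and suppose λ* ∈ ℝ^k satisfies λ* ≥ 0 and 1ᵀλ* = 1. Define y* ∈ (0,1)^n by y*_j = 1/(1 + exp((Gᵀλ*)_j)) and t* = max_{1 ≤ i ≤ k} (Gy* + h)_i. If complementary slackness holds, i.e., λ*_i · ((Gy* + h)_i − t*) = 0 for every i, then (y*, t*) is a global minimizer of t − H(y) over all y ∈ [0,1]^n and t ∈ ℝ satisfying Gy + h ≤ t·1. -/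
open Real Matrix Set

namespace Real

lemma sub_le_mul_log_sub_log {y p : ℝ} (hy : 0 ≤ y) (hp : 0 < p) :
    y - p ≤ y * (log y - log p) := by
  rcases hy.eq_or_lt with rfl | hy
  · simpa using hp.le
  · have hlog := log_le_sub_one_of_pos (div_pos hp hy)
    rw [log_div hp.ne' hy.ne'] at hlog
    have hmul := mul_le_mul_of_nonneg_left hlog hy.le
    have hcancel : y * (p / y - 1) = p - y := by field_simp
    linarith

lemma binaryKL_nonneg {y p : ℝ} (hy₀ : 0 ≤ y) (hy₁ : y ≤ 1) (hp₀ : 0 < p) (hp₁ : p < 1) :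
    0 ≤ y * (log y - log p) + (1 - y) * (log (1 - y) - log (1 - p)) := by
  linarith [sub_le_mul_log_sub_log hy₀ hp₀,
    sub_le_mul_log_sub_log (sub_nonneg.2 hy₁) (sub_pos.2 hp₁)]

lemma log_sigmoid_neg (x : ℝ) : log (sigmoid (-x)) = log (sigmoid x) - x := by
  rw [← sigmoid_mul_rexp_neg, log_mul (sigmoid_pos x).ne' (exp_pos _).ne', log_exp]
  ring

lemma isMinOn_sigmoid_neg (c : ℝ) :
    IsMinOn (fun y => y * log y + (1 - y) * log (1 - y) + c * y) (Icc 0 1) (sigmoid (-c)) := by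
  refine isMinOn_iff.2 fun y hy => ?_
  set p := sigmoid (-c)
  have hKL := binaryKL_nonneg hy.1 hy.2 (sigmoid_pos (-c)) (sigmoid_lt_one (-c))
  have hlog : log (1 - p) = log p + c := by
    rw [show 1 - p = sigmoid c by linarith [sigmoid_neg c], log_sigmoid_neg]
    ring
  rw [hlog] at hKL
  simp only [hlog]
  linear_combination hKL

end Real

lemma isMinOn_negEnt_add_dotProduct {n : ℕ} (c : Fin n → ℝ) :
    IsMinOn (fun y => negEnt y + c ⬝ᵥ y) (Icc 0 1) (fun j => sigmoid (-c j)) := by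
  refine isMinOn_iff.2 fun y hy => ?_
  simp only [negEnt, dotProduct, ← Finset.sum_add_distrib]
  exact Finset.sum_le_sum fun j _ =>
    isMinOn_iff.1 (isMinOn_sigmoid_neg (c j)) (y j) ⟨hy.1 j, hy.2 j⟩

section ConvexWeights

variable {ι : Type*} [Fintype ι] {w v : ι → ℝ} {t : ℝ}

lemma dotProduct_le_of_forall_le (hw : ∀ i, 0 ≤ w i) (hsum : ∑ i, w i = 1)
    (hv : ∀ i, v i ≤ t) : w ⬝ᵥ v ≤ t :=
  calc w ⬝ᵥ v ≤ ∑ i, w i * t :=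
        Finset.sum_le_sum fun i _ => mul_le_mul_of_nonneg_left (hv i) (hw i)
    _ = t := by rw [← Finset.sum_mul, hsum, one_mul]

lemma dotProduct_eq_of_mul_sub_eq_zero (hsum : ∑ i, w i = 1)
    (hcs : ∀ i, w i * (v i - t) = 0) : w ⬝ᵥ v = t := by
  have h : w ⬝ᵥ v - t = ∑ i, w i * (v i - t) := by
    simp only [dotProduct, mul_sub, Finset.sum_sub_distrib, ← Finset.sum_mul, hsum, one_mul]
  rw [← sub_eq_zero, h, Finset.sum_eq_zero fun i _ => hcs i]

end ConvexWeights

/-- KKT sufficiency for the bundle entropy subproblem: if `λ* ≥ 0` with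
`1ᵀλ* = 1`, `y*ⱼ = 1/(1 + exp ((Gᵀλ*)ⱼ))`, `t* = maxᵢ (Gy* + h)ᵢ`, and complementary
slackness `λ*ᵢ · ((Gy* + h)ᵢ - t*) = 0` holds for every `i`, then `(y*, t*)` is a global
minimizer of `t - H(y) = t + negEnt y` over all `y ∈ [0,1]ⁿ`, `t ∈ ℝ` with `Gy + h ≤ t·1`. -/
theorem bundle_entropy_kkt_sufficient (k n : ℕ) (hk : 0 < k)
    (G : Matrix (Fin k) (Fin n) ℝ) (h : Fin k → ℝ)
    (lamstar : Fin k → ℝ) (hlam : ∀ i, 0 ≤ lamstar i) (hsum : ∑ i, lamstar i = 1)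
    (ystar : Fin n → ℝ)
    (hystar : ∀ j, ystar j = 1 / (1 + Real.exp (G.transpose.mulVec lamstar j)))
    (tstar : ℝ)
    (htstar : tstar = Finset.univ.sup' ⟨⟨0, hk⟩, Finset.mem_univ _⟩
      fun i => G.mulVec ystar i + h i)
    (hcs : ∀ i, lamstar i * (G.mulVec ystar i + h i - tstar) = 0) :
    ystar ∈ Set.Icc (0 : Fin n → ℝ) 1 ∧
    (∀ i, G.mulVec ystar i + h i ≤ tstar) ∧
    (∀ y ∈ Set.Icc (0 : Fin n → ℝ) 1, ∀ t : ℝ, (∀ i, G.mulVec y i + h i ≤ t) →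
      tstar + negEnt ystar ≤ t + negEnt y) := by
  set c := Gᵀ *ᵥ lamstar
  have hystar_eq : ystar = fun j => sigmoid (-c j) :=
    funext fun j => by rw [hystar, sigmoid_def, neg_neg, one_div]
  have hlag : ∀ z, lamstar ⬝ᵥ (G *ᵥ z + h) = c ⬝ᵥ z + lamstar ⬝ᵥ h := fun z => by
    rw [dotProduct_add, dotProduct_mulVec, ← mulVec_transpose]
  refine ⟨hystar_eq ▸ ⟨fun j => sigmoid_nonneg _, fun j => sigmoid_le_one _⟩,
    fun i => htstar ▸ Finset.le_sup' (fun i => (G *ᵥ ystar) i + h i) (Finset.mem_univ i),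
    fun y hy t ht => ?_⟩
  have hmin : negEnt ystar + c ⬝ᵥ ystar ≤ negEnt y + c ⬝ᵥ y := by
    rw [hystar_eq]
    exact isMinOn_iff.1 (isMinOn_negEnt_add_dotProduct c) y hy
  calc tstar + negEnt ystar = negEnt ystar + c ⬝ᵥ ystar + lamstar ⬝ᵥ h := by
        rw [← dotProduct_eq_of_mul_sub_eq_zero (v := G *ᵥ ystar + h) hsum hcs, hlag]
        ring
    _ ≤ negEnt y + c ⬝ᵥ y + lamstar ⬝ᵥ h := by linarith
    _ = negEnt y + lamstar ⬝ᵥ (G *ᵥ y + h) := by rw [hlag]; ring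
    _ ≤ t + negEnt y := by linarith [dotProduct_le_of_forall_le (v := G *ᵥ y + h) hlam hsum ht]
end

section
/- Exact LP inference at a fixed input (layerwise claim): fix y ∈ ℝ^p, and let W_i^{(z)} (i = 1, …, k−1) have nonnegative entries. Define the ReLU network values ẑ_1 = max(0, W_0^{(y)} y + b_0), ẑ_{i+1} = max(0, W_i^{(z)} ẑ_i + W_i^{(y)} y + b_i) for i = 1, …, k−2, and f(y) = W_{k−1}^{(z)} ẑ_{k−1} + W_{k−1}^{(y)} y + b_{k−1} (a scalar). Then the minimum of z_k over all (z_1, …, z_k) satisfying z_{i+1} ≥ W_i^{(z)} z_i + W_i^{(y)} y + b_i for i = 0, …, k−1 (with z_0 = 0) and z_i ≥ 0 for i = 1, …, k−1 equals f(y), and it is attained at z_i = ẑ_i for i < k and z_k = f(y). -/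
/-- Exact LP inference at a fixed input.  We write the number of layers as
`k = m + 1` (so the final, linear, layer has index `k - 1 = m`).  Fix `y ∈ ℝᵖ` and let the
`Wᵢ⁽ᶻ⁾` for `1 ≤ i ≤ k - 1` have nonnegative entries.  Define the ReLU network values
`ẑ_{i+1} = max(0, Wᵢ⁽ᶻ⁾ ẑᵢ + Wᵢ⁽ʸ⁾ y + bᵢ)` (with `ẑ₀ = 0`, so `ẑ₁ = max(0, W₀⁽ʸ⁾ y + b₀)`)
and the scalar `f(y) = W_m⁽ᶻ⁾ ẑ_m + W_m⁽ʸ⁾ y + b_m`.  Then the minimum of `z_k` over all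
`(z₁, …, z_k)` with `z_{i+1} ≥ Wᵢ⁽ᶻ⁾ zᵢ + Wᵢ⁽ʸ⁾ y + bᵢ` for `i = 0, …, k - 1` (with `z₀ = 0`)
and `zᵢ ≥ 0` for `i = 1, …, k - 1` equals `f(y)`, and it is attained at `zᵢ = ẑᵢ` for `i < k`
and `z_k = f(y)`. -/
theorem icnn_lp_inference_fixed_input
    (m p : ℕ)
    (d : ℕ → ℕ) (hdk : d (m + 1) = 1)
    (Wz : (i : ℕ) → Matrix (Fin (d (i + 1))) (Fin (d i)) ℝ)
    (Wy : (i : ℕ) → Matrix (Fin (d (i + 1))) (Fin p) ℝ)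
    (b : (i : ℕ) → Fin (d (i + 1)) → ℝ)
    (hW : ∀ i, 1 ≤ i → i ≤ m → ∀ r c, 0 ≤ Wz i r c)
    (y : Fin p → ℝ)
    (zhat : (i : ℕ) → Fin (d i) → ℝ)
    (hzhat0 : zhat 0 = 0)
    (hzhatrec : ∀ i, zhat (i + 1) = fun j =>
      max 0 ((Wz i).mulVec (zhat i) j + (Wy i).mulVec y j + b i j))
    (fy : ℝ)
    (hfy : fy = (Wz m).mulVec (zhat m) ⟨0, by omega⟩
      + (Wy m).mulVec y ⟨0, by omega⟩ + b m ⟨0, by omega⟩) :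
    IsLeast {c : ℝ | ∃ z : (i : ℕ) → Fin (d i) → ℝ,
        z 0 = 0 ∧
        (∀ i ≤ m, ∀ j, (Wz i).mulVec (z i) j + (Wy i).mulVec y j + b i j ≤ z (i + 1) j) ∧
        (∀ i, 1 ≤ i → i ≤ m → ∀ j, 0 ≤ z i j) ∧
        c = z (m + 1) ⟨0, by omega⟩} fy ∧
    ∃ z : (i : ℕ) → Fin (d i) → ℝ,
      z 0 = 0 ∧
      (∀ i ≤ m, ∀ j, (Wz i).mulVec (z i) j + (Wy i).mulVec y j + b i j ≤ z (i + 1) j) ∧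
      (∀ i, 1 ≤ i → i ≤ m → ∀ j, 0 ≤ z i j) ∧
      (∀ i ≤ m, z i = zhat i) ∧
      z (m + 1) ⟨0, by omega⟩ = fy := by
  -- zhat i ≥ 0 for i ≥ 1
  have hzhatnn : ∀ i, 1 ≤ i → ∀ j, 0 ≤ zhat i j := by
    intro i hi j
    obtain ⟨i, rfl⟩ := Nat.exists_eq_add_of_le' hi
    rw [hzhatrec]
    exact le_max_left _ _
  -- lower bound lemma
  have key : ∀ z : (i : ℕ) → Fin (d i) → ℝ,
      z 0 = 0 →
      (∀ i ≤ m, ∀ j, (Wz i).mulVec (z i) j + (Wy i).mulVec y j + b i j ≤ z (i + 1) j) →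
      (∀ i, 1 ≤ i → i ≤ m → ∀ j, 0 ≤ z i j) →
      ∀ i, i ≤ m → ∀ j, zhat i j ≤ z i j := by
    intro z hz0 hcon hnn i
    induction i with
    | zero => intro _ j; rw [hzhat0, hz0]
    | succ i ih =>
      intro hi j
      rw [hzhatrec]
      refine max_le (hnn (i + 1) (by omega) hi j) ?_
      have h1 : (Wz i).mulVec (zhat i) j ≤ (Wz i).mulVec (z i) j := by
        rcases Nat.eq_zero_or_pos i with h | h
        · subst h; rw [hz0, hzhat0]
        · simp only [Matrix.mulVec, dotProduct]
          exact Finset.sum_le_sum fun c _ =>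
            mul_le_mul_of_nonneg_left (ih (by omega) c) (hW i h (by omega) j c)
      calc (Wz i).mulVec (zhat i) j + (Wy i).mulVec y j + b i j
          ≤ (Wz i).mulVec (z i) j + (Wy i).mulVec y j + b i j := by linarith
        _ ≤ z (i + 1) j := hcon i (by omega) j
  have mono : ∀ z : (i : ℕ) → Fin (d i) → ℝ,
      z 0 = 0 →
      (∀ i ≤ m, ∀ j, (Wz i).mulVec (z i) j + (Wy i).mulVec y j + b i j ≤ z (i + 1) j) →
      (∀ i, 1 ≤ i → i ≤ m → ∀ j, 0 ≤ z i j) →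
      ∀ j, (Wz m).mulVec (zhat m) j ≤ (Wz m).mulVec (z m) j := by
    intro z hz0 hcon hnn j
    rcases Nat.eq_zero_or_pos m with h | h
    · subst h; rw [hz0, hzhat0]
    · simp only [Matrix.mulVec, dotProduct]
      exact Finset.sum_le_sum fun c _ =>
        mul_le_mul_of_nonneg_left (key z hz0 hcon hnn m le_rfl c) (hW m h le_rfl j c)
  -- witness
  set zw : (i : ℕ) → Fin (d i) → ℝ :=
    fun i => if h : i ≤ m then zhat i else fun _ => fy with hzw
  have hzwle : ∀ i ≤ m, zw i = zhat i := fun i hi => dif_pos hi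
  have hzwtop : ∀ j, zw (m + 1) j = fy := fun j => by
    simp [hzw, Nat.not_succ_le_self]
  have hjall : ∀ j : Fin (d (m + 1)), j = ⟨0, by omega⟩ := by
    intro j
    have := j.isLt
    exact Fin.ext (by omega)
  have hfeas : zw 0 = 0 ∧
      (∀ i ≤ m, ∀ j, (Wz i).mulVec (zw i) j + (Wy i).mulVec y j + b i j ≤ zw (i + 1) j) ∧
      (∀ i, 1 ≤ i → i ≤ m → ∀ j, 0 ≤ zw i j) := by
    refine ⟨by rw [hzwle 0 (Nat.zero_le m), hzhat0], ?_, ?_⟩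
    · intro i hi j
      rw [hzwle i hi]
      rcases Nat.lt_or_ge i m with h | h
      · rw [hzwle (i + 1) h, hzhatrec]
        exact le_max_right _ _
      · have him : i = m := le_antisymm hi h
        subst him
        rw [hzwtop j, hfy, hjall j]
    · intro i h1 h2 j
      rw [hzwle i h2]
      exact hzhatnn i h1 j
  obtain ⟨hf0, hfcon, hfnn⟩ := hfeas
  constructor
  · constructor
    · exact ⟨zw, hf0, hfcon, hfnn, (hzwtop _).symm⟩
    · rintro c ⟨z, hz0, hcon, hnn, rfl⟩
      have := hcon m le_rfl ⟨0, by omega⟩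
      have h2 := mono z hz0 hcon hnn ⟨0, by omega⟩
      rw [hfy]; linarith
  · exact ⟨zw, hf0, hfcon, hfnn, hzwle, hzwtop _⟩
end
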